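/- arXiv:1010.1256 — 2 statements merged into one kernel-verified Lean document; each statement's English description precedes it below -/
import Mathlib

section
/- Consider the EAQ convolutional encoder with m = 1 memory qubit, k = 1 information qubit, a = 0 ancilla qubits, c = 1 ebit and n = 2 physical qubits, whose seed transformation U is the binary symplectic transformation determined on three qubits (memory, information, ebit) by Z⊗I⊗I ↦ Z⊗I⊗X, I⊗Z⊗I ↦ X⊗Z⊗Y, I⊗I⊗Z ↦ X⊗Y⊗Z, X⊗I⊗I ↦ X⊗X⊗X, I⊗X⊗I ↦ Y⊗I⊗Y, I⊗I⊗X ↦ Y⊗X⊗Y (the first output qubit being the memory and the last two the physical qubits). Then this encoder is non-catastrophic: every directed cycle in its state diagram all of whose edges have physical labels of weight zero has logical labels of weight zero on all its edges. -/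
abbrev F2 := ZMod 2

abbrev Pauli (ι : Type) : Type := ι → F2 × F2

/-- The weight of a Pauli operator: the number of qubits on which it acts nontrivially. -/
def pWeight {ι : Type} [Fintype ι] (p : Pauli ι) : ℕ :=
  (Finset.univ.filter fun i => p i ≠ 0).card

/-- Symplectic (x, z)-pairs for the one-qubit Paulis X, Y, Z. -/
def pX : F2 × F2 := (1, 0)
def pY : F2 × F2 := (1, 1)
def pZ : F2 × F2 := (0, 1)

/-- The single-qubit Pauli `p` as a Pauli on one qubit. -/
def single (p : F2 × F2) : Pauli (Fin 1) := fun _ => p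

/-- The two-qubit Pauli `p ⊗ q`. -/
def pair (p q : F2 × F2) : Pauli (Fin 2) := ![p, q]

/-- Assemble the blocks (memory : information : ebit) into one input vector. -/
def inVec (M L E : Pauli (Fin 1)) : Pauli (Fin 1 ⊕ Fin 1 ⊕ Fin 1) :=
  Sum.elim M (Sum.elim L E)

/-- Assemble the blocks (memory : physical) into one output vector. -/
def outVec (M : Pauli (Fin 1)) (P : Pauli (Fin 2)) : Pauli (Fin 1 ⊕ Fin 2) :=
  Sum.elim M P

/-- The memory part M' of an output vector (M' : P). -/
def outMem (w : Pauli (Fin 1 ⊕ Fin 2)) : Pauli (Fin 1) := fun i => w (Sum.inl i)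

/-- The physical part P of an output vector (M' : P). -/
def outPhys (w : Pauli (Fin 1 ⊕ Fin 2)) : Pauli (Fin 2) := fun i => w (Sum.inr i)

/-- The seed transformation of the example m = 1, k = 1, a = 0, c = 1, n = 2 EAQ
convolutional encoder: determined by Z⊗I⊗I ↦ Z⊗I⊗X, I⊗Z⊗I ↦ X⊗Z⊗Y, I⊗I⊗Z ↦ X⊗Y⊗Z,
X⊗I⊗I ↦ X⊗X⊗X, I⊗X⊗I ↦ Y⊗I⊗Y, I⊗I⊗X ↦ Y⊗X⊗Y. -/
def IsExampleSeed (U : Pauli (Fin 1 ⊕ Fin 1 ⊕ Fin 1) ≃ₗ[F2] Pauli (Fin 1 ⊕ Fin 2)) :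
    Prop :=
  U (inVec (single pZ) 0 0) = outVec (single pZ) (pair 0 pX) ∧
  U (inVec 0 (single pZ) 0) = outVec (single pX) (pair pZ pY) ∧
  U (inVec 0 0 (single pZ)) = outVec (single pX) (pair pY pZ) ∧
  U (inVec (single pX) 0 0) = outVec (single pX) (pair pX pX) ∧
  U (inVec 0 (single pX) 0) = outVec (single pY) (pair 0 pY) ∧
  U (inVec 0 0 (single pX)) = outVec (single pY) (pair pX pY)

/-- Edge of the state diagram: since a = 0, there is exactly one edge per pair (M, L),
with the identity on the ebit position. -/
def Edge (U : Pauli (Fin 1 ⊕ Fin 1 ⊕ Fin 1) ≃ₗ[F2] Pauli (Fin 1 ⊕ Fin 2))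
    (M M' L : Pauli (Fin 1)) (P : Pauli (Fin 2)) : Prop :=
  outMem (U (inVec M L 0)) = M' ∧ outPhys (U (inVec M L 0)) = P

lemma pWeight_eq_zero_iff {ι : Type} [Fintype ι] {p : Pauli ι} :
    pWeight p = 0 ↔ p = 0 := by
  constructor
  · intro h
    funext i
    by_contra hne
    rw [Pi.zero_apply] at hne
    have hm : i ∈ Finset.univ.filter fun j => p j ≠ 0 := by
      simp [hne]
    have hc := Finset.card_pos.mpr ⟨i, hm⟩
    unfold pWeight at h
    omega
  · intro h
    subst h
    simp [pWeight]

lemma inVec_decomp (M L : Pauli (Fin 1)) :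
    inVec M L 0 = (M 0).1 • inVec (single pX) 0 0 + (M 0).2 • inVec (single pZ) 0 0 +
      (L 0).1 • inVec 0 (single pX) 0 + (L 0).2 • inVec 0 (single pZ) 0 := by
  funext i
  rcases i with i | i | i <;>
    · have hi : i = 0 := Subsingleton.elim _ _
      subst hi
      simp [inVec, single, pX, pZ, Prod.ext_iff]

lemma key (U : Pauli (Fin 1 ⊕ Fin 1 ⊕ Fin 1) ≃ₗ[F2] Pauli (Fin 1 ⊕ Fin 2))
    (hU : IsExampleSeed U) (M L : Pauli (Fin 1))
    (hP : outPhys (U (inVec M L 0)) = 0) : L = 0 := by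
  obtain ⟨h1, h2, h3, h4, h5, h6⟩ := hU
  have hdec := inVec_decomp M L
  rw [hdec] at hP
  simp only [map_add, map_smul, h1, h2, h4, h5] at hP
  have e0 := congrFun hP (0 : Fin 2)
  have e1 := congrFun hP (1 : Fin 2)
  simp [outPhys, outVec, pair, pX, pY, pZ, Prod.ext_iff] at e0 e1
  funext i
  have hi : i = 0 := Subsingleton.elim _ _
  subst hi
  have hd : (L 0).2 = 0 := by
    simpa using e0.2
  have hc : (L 0).1 = 0 := by
    have := e1.2
    simp [hd] at this
    simpa using this
  exact Prod.ext hc hd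

/-- The example encoder is non-catastrophic: every directed cycle in
its state diagram all of whose edges have physical labels of weight zero has logical
labels of weight zero on all its edges. -/
theorem example_encoder_nonCatastrophic
    (U : Pauli (Fin 1 ⊕ Fin 1 ⊕ Fin 1) ≃ₗ[F2] Pauli (Fin 1 ⊕ Fin 2))
    (hU : IsExampleSeed U) :
    ∀ ℓ : ℕ, 0 < ℓ → ∀ (Ms Ls : ZMod ℓ → Pauli (Fin 1)) (Ps : ZMod ℓ → Pauli (Fin 2)),
      (∀ t, Edge U (Ms t) (Ms (t + 1)) (Ls t) (Ps t)) →
      (∀ t, pWeight (Ps t) = 0) → ∀ t, pWeight (Ls t) = 0 := by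
  intro ℓ hℓ Ms Ls Ps hE hP t
  have h0 : Ps t = 0 := pWeight_eq_zero_iff.mp (hP t)
  have := (hE t).2
  rw [h0] at this
  have hL := key U hU (Ms t) (Ls t) this
  rw [hL]
  exact pWeight_eq_zero_iff.mpr rfl
end

section
/- Consider the EAQ convolutional encoder with m = 1 memory qubit, k = 1 information qubit, a = 0 ancilla qubits, c = 1 ebit and n = 2 physical qubits, whose seed transformation U is the binary symplectic transformation determined on three qubits (memory, information, ebit) by Z⊗I⊗I ↦ Z⊗I⊗X, I⊗Z⊗I ↦ X⊗Z⊗Y, I⊗I⊗Z ↦ X⊗Y⊗Z, X⊗I⊗I ↦ X⊗X⊗X, I⊗X⊗I ↦ Y⊗I⊗Y, I⊗I⊗X ↦ Y⊗X⊗Y (the first output qubit being the memory and the last two the physical qubits). Then this encoder is recursive: for every logical input sequence of total weight one — one frame carries one of the weight-one Paulis X, Y or Z on the information qubit and all other frames carry the identity — the resulting (unique, since a = 0) physical output sequence (P_t) satisfies P_t ≠ 0 for infinitely many t. -/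
lemma single_eq' (M : Pauli (Fin 1)) : M = single (M 0) :=
  funext fun i => congrArg M (Subsingleton.elim i 0)

lemma outMem_outVec (M : Pauli (Fin 1)) (P : Pauli (Fin 2)) :
    outMem (outVec M P) = M := rfl

lemma outPhys_outVec (M : Pauli (Fin 1)) (P : Pauli (Fin 2)) :
    outPhys (outVec M P) = P := rfl

lemma inVec_zero : (inVec 0 0 0 : Pauli (Fin 1 ⊕ Fin 1 ⊕ Fin 1)) = 0 := by decide

/-- Step with nonzero memory, zero logical input: memory is preserved and the
physical output is nonzero. -/
lemma memStep (U : Pauli (Fin 1 ⊕ Fin 1 ⊕ Fin 1) ≃ₗ[F2] Pauli (Fin 1 ⊕ Fin 2))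
    (hU : IsExampleSeed U) (m : F2 × F2) (hm : m ≠ 0) :
    ∃ p : Pauli (Fin 2), p ≠ 0 ∧ U (inVec (single m) 0 0) = outVec (single m) p := by
  obtain ⟨h1, h2, h3, h4, h5, h6⟩ := hU
  have hmem : m = pX ∨ m = pY ∨ m = pZ := by revert hm; revert m; decide
  rcases hmem with rfl | rfl | rfl
  · exact ⟨pair pX pX, by decide, h4⟩
  · refine ⟨pair pX 0, by decide, ?_⟩
    have hsum : inVec (single pY) 0 0 = inVec (single pX) 0 0 + inVec (single pZ) 0 0 := by
      decide
    rw [hsum, map_add, h4, h1]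
    decide
  · exact ⟨pair 0 pX, by decide, h1⟩

/-- Step with zero memory and a nonzero logical input: the new memory is nonzero. -/
lemma logStep (U : Pauli (Fin 1 ⊕ Fin 1 ⊕ Fin 1) ≃ₗ[F2] Pauli (Fin 1 ⊕ Fin 2))
    (hU : IsExampleSeed U) (l : F2 × F2) (hl : l ≠ 0) :
    ∃ m : F2 × F2, m ≠ 0 ∧ ∃ p : Pauli (Fin 2),
      U (inVec 0 (single l) 0) = outVec (single m) p := by
  obtain ⟨h1, h2, h3, h4, h5, h6⟩ := hU
  have hmem : l = pX ∨ l = pY ∨ l = pZ := by revert hl; revert l; decide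
  rcases hmem with rfl | rfl | rfl
  · exact ⟨pY, by decide, pair 0 pY, h5⟩
  · refine ⟨pZ, by decide, pair pZ 0, ?_⟩
    have hsum : inVec 0 (single pY) 0 = inVec 0 (single pX) 0 + inVec 0 (single pZ) 0 := by
      decide
    rw [hsum, map_add, h5, h2]
    decide
  · exact ⟨pX, by decide, pair pZ pY, h2⟩

/-- The example encoder is recursive: for every logical input sequence
of total weight one (one frame carries a weight-one Pauli on the information qubit, all
other frames carry the identity), the resulting physical output sequence — obtained by
setting M₀ = 0, placing the identity on the ebit position, and recursively setting
(M_{t+1} : P_t) = (M_t : L_t : 0)U — is nonzero in infinitely many frames. -/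
theorem example_encoder_recursive
    (U : Pauli (Fin 1 ⊕ Fin 1 ⊕ Fin 1) ≃ₗ[F2] Pauli (Fin 1 ⊕ Fin 2))
    (hU : IsExampleSeed U) :
    ∀ L : ℕ → Pauli (Fin 1),
      (∃ t0 : ℕ, pWeight (L t0) = 1 ∧ ∀ t, t ≠ t0 → L t = 0) →
      ∀ (M : ℕ → Pauli (Fin 1)) (P : ℕ → Pauli (Fin 2)),
        M 0 = 0 →
        (∀ t, M (t + 1) = outMem (U (inVec (M t) (L t) 0)) ∧
              P t = outPhys (U (inVec (M t) (L t) 0))) →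
        {t : ℕ | P t ≠ 0}.Infinite := by
  intro L hL M P hM0 hstep
  obtain ⟨t0, hw, hL0⟩ := hL
  -- the memory is zero up to time t0
  have hMzero : ∀ t, t ≤ t0 → M t = 0 := by
    intro t
    induction t with
    | zero => intro _; exact hM0
    | succ n ih =>
      intro hn
      have hnlt : n < t0 := Nat.lt_of_succ_le hn
      have hLn : L n = 0 := hL0 n (Nat.ne_of_lt hnlt)
      rw [(hstep n).1, ih (Nat.le_of_lt hnlt), hLn, inVec_zero, map_zero]
      rfl
  -- the logical input at time t0 is nonzero
  have hl : L t0 0 ≠ 0 := by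
    intro h
    have hLz : L t0 = 0 := by
      rw [single_eq' (L t0), h]
      decide
    rw [hLz] at hw
    simp [pWeight] at hw
  obtain ⟨m, hm, p, hUp⟩ := logStep U hU (L t0 0) hl
  have hM1 : M (t0 + 1) = single m := by
    rw [(hstep t0).1, hMzero t0 le_rfl, single_eq' (L t0), hUp, outMem_outVec]
  obtain ⟨q, hq, hUq⟩ := memStep U hU m hm
  -- for all t ≥ t0 + 1 the memory is `single m`
  have hMconst : ∀ t, t0 + 1 ≤ t → M t = single m := by
    intro t ht
    induction t, ht using Nat.le_induction with
    | base => exact hM1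
    | succ n hn ih =>
      have hLn : L n = 0 := hL0 n (by omega)
      rw [(hstep n).1, ih, hLn, hUq, outMem_outVec]
  -- for all t ≥ t0 + 1 the physical output is nonzero
  have hP : ∀ t, t0 + 1 ≤ t → P t ≠ 0 := by
    intro t ht
    have hLt : L t = 0 := hL0 t (by omega)
    rw [(hstep t).2, hMconst t ht, hLt, hUq, outPhys_outVec]
    exact hq
  exact (Set.Ici_infinite (t0 + 1)).mono fun t ht => hP t ht
end
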